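/- Let C be a finite-type Cartan matrix of size n. Then in the ring A_C, for every index i ∈ {1,…,n} and every subset J ⊆ {1,…,n} with i ∈ J, one has ϖ_i · ϖ_J = ∑_{s ∉ J} b^{K_s,ŝ}_{i,s} · ϖ_{J ∪ {s}} + (2t·∑_{j∈J}[C_J⁻¹]_{i,j}) · ϖ_J, where for s ∉ J we set K_s := J ∪ {s}, B_{K_s} := I − (1/2)·C_{K_s}, B̂_{K_s} denotes B_{K_s} with the row indexed by s replaced by zeros, and b^{K_s,ŝ}_{i,s} denotes the (i,s)-entry of B̂_{K_s}·(I − B̂_{K_s})⁻¹. -/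

import Mathlib

/-- A finite-type Cartan matrix: an integer square matrix (on a nonempty finite index set) with
`2`'s on the diagonal, nonpositive off-diagonal entries, which becomes symmetric positive
definite after multiplication by some diagonal matrix with strictly positive diagonal. -/
def IsFiniteCartan {ι : Type*} [Fintype ι] (C : Matrix ι ι ℤ) : Prop :=
  Nonempty ι ∧ (∀ i, C i i = 2) ∧ (∀ i j, i ≠ j → C i j ≤ 0) ∧
    ∃ D : Matrix ι ι ℝ, D.IsDiag ∧ (∀ i, 0 < D i i) ∧
      (D * C.map (Int.cast : ℤ → ℝ)).PosDef

/-- `[C_K⁻¹]_{i,k}`: the `(i,k)`-entry of the inverse of the principal submatrix of `C` (viewed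
as a rational matrix) with rows and columns indexed by `K`, for `i, k ∈ K` (and `0` otherwise). -/
noncomputable def cartanSubInv {n : ℕ} (C : Matrix (Fin n) (Fin n) ℤ) (K : Finset (Fin n))
    (i k : Fin n) : ℚ :=
  if hi : i ∈ K then
    if hk : k ∈ K then
      (((C.map (Int.cast : ℤ → ℚ)).submatrix (Subtype.val : {x // x ∈ K} → Fin n)
          Subtype.val)⁻¹) ⟨i, hi⟩ ⟨k, hk⟩
    else 0
  else 0
/-- The ideal `I_C ⊆ ℚ[t][x_1,…,x_n]` generated by the polynomials
`∑_{j=1}^n C_{ij}·x_i·x_j − 2t·x_i`, one for each `i`. -/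
noncomputable def petIdeal {n : ℕ} (C : Matrix (Fin n) (Fin n) ℤ) :
    Ideal (MvPolynomial (Fin n) (Polynomial ℚ)) :=
  Ideal.span (Set.range fun i : Fin n =>
    (∑ j : Fin n, MvPolynomial.C ((C i j : Polynomial ℚ)) *
        MvPolynomial.X i * MvPolynomial.X j) -
      MvPolynomial.C (2 * Polynomial.X) * MvPolynomial.X i)

/-- `ϖ_J`: the image in `A_C = ℚ[t][x_1,…,x_n]/I_C` of the monomial `∏_{j∈J} x_j`. -/
noncomputable def petClass {n : ℕ} (C : Matrix (Fin n) (Fin n) ℤ) (J : Finset (Fin n)) :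
    MvPolynomial (Fin n) (Polynomial ℚ) ⧸ petIdeal C :=
  Ideal.Quotient.mk (petIdeal C) (∏ j ∈ J, MvPolynomial.X j)

/-- `b^{K,ŝ}_{i,k}`: the `(i,k)`-entry of `B̂_K·(I − B̂_K)⁻¹`, where `B_K := I − (1/2)·C_K`
(a rational matrix indexed by `K`) and `B̂_K` is `B_K` with the row indexed by `s` replaced by
zeros (defined to be `0` if `i`, `k` or `s` fails to lie in `K`). -/
noncomputable def bHatEntry {n : ℕ} (C : Matrix (Fin n) (Fin n) ℤ) (K : Finset (Fin n))
    (s i k : Fin n) : ℚ :=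
  if hi : i ∈ K then
    if hk : k ∈ K then
      if hs : s ∈ K then
        (fun Bh : Matrix {x // x ∈ K} {x // x ∈ K} ℚ =>
            (Bh * (1 - Bh)⁻¹) ⟨i, hi⟩ ⟨k, hk⟩)
          (Matrix.updateRow
            ((1 : Matrix {x // x ∈ K} {x // x ∈ K} ℚ) -
              (1 / 2 : ℚ) • ((C.map (Int.cast : ℤ → ℚ)).submatrix
                (Subtype.val : {x // x ∈ K} → Fin n) Subtype.val))
            ⟨s, hs⟩ 0)
      else 0
    else 0
  else 0

open Matrix

theorem posdef_det_submatrix_ne_zero {m l : Type*} [Fintype m] [Fintype l] [DecidableEq m] [DecidableEq l]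
    {M : Matrix l l ℝ} (hM : M.PosDef) (e : m → l) (he : Function.Injective e) :
    (M.submatrix e e).det ≠ 0 := by
  intro hdet
  rw [← Matrix.exists_mulVec_eq_zero_iff] at hdet
  obtain ⟨x, hx0, hx⟩ := hdet
  set y : l → ℝ := fun t => ∑ j, if e j = t then x j else 0 with hy
  have hyx : ∀ j, y (e j) = x j := by
    intro j
    simp only [hy]
    rw [Finset.sum_eq_single j (by intro b _ hb; simp [he.ne hb]) (by simp)]
    simp
  have hy0 : y ≠ 0 := by
    intro h
    apply hx0
    funext j
    have := congrFun h (e j)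
    rw [hyx j] at this
    exact this
  have hMy : ∀ t, (M *ᵥ y) t = ∑ k, M t (e k) * x k := by
    intro t
    simp only [mulVec, dotProduct, hy, Finset.mul_sum, mul_ite, mul_zero]
    rw [Finset.sum_comm]
    refine Finset.sum_congr rfl fun k _ => ?_
    rw [Finset.sum_ite_eq Finset.univ (e k) (fun u => M t u * x k)]
    simp
  have key : star y ⬝ᵥ (M *ᵥ y) = 0 := by
    simp only [star_trivial, dotProduct, hy]
    calc ∑ t, (∑ j, if e j = t then x j else 0) * (M *ᵥ y) t
        = ∑ t, ∑ j, (if e j = t then x j * (M *ᵥ y) t else 0) := by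
          refine Finset.sum_congr rfl fun t _ => ?_
          rw [Finset.sum_mul]
          refine Finset.sum_congr rfl fun j _ => ?_
          split <;> simp
      _ = ∑ j, x j * (M *ᵥ y) (e j) := by
          rw [Finset.sum_comm]
          refine Finset.sum_congr rfl fun j _ => ?_
          rw [Finset.sum_ite_eq Finset.univ (e j) (fun t => x j * (M *ᵥ y) t)]
          simp
      _ = ∑ j, x j * ((M.submatrix e e) *ᵥ x) j := by
          refine Finset.sum_congr rfl fun j _ => ?_
          rw [hMy]
          rfl
      _ = 0 := by rw [hx]; simp
  exact absurd key (ne_of_gt (hM.dotProduct_mulVec_pos hy0))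


theorem cartan_sub_det_isUnit {n : ℕ} (C : Matrix (Fin n) (Fin n) ℤ) (hC : IsFiniteCartan C)
    (K : Finset (Fin n)) :
    IsUnit ((C.map (Int.cast : ℤ → ℚ)).submatrix
      (Subtype.val : {x // x ∈ K} → Fin n) Subtype.val).det := by
  obtain ⟨-, -, -, D, hdiag, hpos, hPD⟩ := hC
  set e := (Subtype.val : {x // x ∈ K} → Fin n) with he'
  have hval : Function.Injective e := Subtype.val_injective
  have h1 : ((D * C.map (Int.cast : ℤ → ℝ)).submatrix e e).det ≠ 0 :=
    posdef_det_submatrix_ne_zero hPD _ hval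
  have h2 : (D * C.map (Int.cast : ℤ → ℝ)).submatrix e e =
      (D.submatrix e e) * ((C.map (Int.cast : ℤ → ℝ)).submatrix e e) := by
    ext i j
    simp only [submatrix_apply, Matrix.mul_apply]
    rw [Finset.sum_eq_single (e i) (fun b _ hb => by rw [hdiag (Ne.symm hb), zero_mul])
      (by simp)]
    rw [Finset.sum_eq_single i (fun b _ hb => by
      rw [hdiag (fun h => hb (hval (by rw [h])).symm), zero_mul]) (by simp)]
  rw [h2, det_mul] at h1
  have h3 : ((C.map (Int.cast : ℤ → ℝ)).submatrix e e).det ≠ 0 := fun h => h1 (by rw [h, mul_zero])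
  have h4 : (C.map (Int.cast : ℤ → ℝ)).submatrix e e
      = ((C.map (Int.cast : ℤ → ℚ)).submatrix e e).map (Rat.cast : ℚ → ℝ) := by
    ext i j
    simp
  rw [isUnit_iff_ne_zero]
  intro h
  apply h3
  rw [h4]
  have : ((C.map (Int.cast : ℤ → ℚ)).submatrix e e).map (Rat.cast : ℚ → ℝ)
      = (algebraMap ℚ ℝ).mapMatrix ((C.map (Int.cast : ℤ → ℚ)).submatrix e e) := rfl
  rw [this, ← RingHom.map_det, h, map_zero]

open Matrix

theorem linsolve {R : Type*} [CommRing R] {m : Type*} [Fintype m] [DecidableEq m]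
    (φ : ℚ →+* R) (A : Matrix m m ℚ) (hA : IsUnit A.det) (v u : m → R)
    (h : ∀ j, ∑ k, φ (A j k) * v k = u j) (i : m) :
    v i = ∑ j, φ (A⁻¹ i j) * u j := by
  have h1 : ∀ j, (A⁻¹ * A) i j = if i = j then 1 else 0 := by
    intro j
    rw [Matrix.nonsing_inv_mul A hA]
    simp [Matrix.one_apply]
  calc v i = ∑ j, φ ((A⁻¹ * A) i j) * v j := by
        rw [Finset.sum_congr rfl (fun j _ => by rw [h1 j])]
        simp [apply_ite φ, ite_mul]
    _ = ∑ j, ∑ k, (φ (A⁻¹ i k) * φ (A k j)) * v j := by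
        refine Finset.sum_congr rfl fun j _ => ?_
        rw [Matrix.mul_apply, map_sum, Finset.sum_mul]
        exact Finset.sum_congr rfl fun k _ => by rw [_root_.map_mul]
    _ = ∑ k, φ (A⁻¹ i k) * ∑ j, φ (A k j) * v j := by
        rw [Finset.sum_comm]
        refine Finset.sum_congr rfl fun k _ => ?_
        rw [Finset.mul_sum]
        exact Finset.sum_congr rfl fun j _ => by ring
    _ = ∑ j, φ (A⁻¹ i j) * u j := Finset.sum_congr rfl fun k _ => by rw [h k]

theorem monk_assemble {R : Type*} [CommRing R] (φ : ℚ →+* R) {m ι : Type*} [Fintype m]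
    (s : Finset ι) (a : m → ℚ) (c : m → ι → ℚ) (T P : R) (Q : ι → R) :
    ∑ j, φ (a j) * (T * P - ∑ t ∈ s, φ (c j t) * Q t)
      = (∑ t ∈ s, φ (-∑ j, a j * c j t) * Q t) + T * φ (∑ j, a j) * P := by
  have part1 : ∑ j, φ (a j) * (T * P) = T * φ (∑ j, a j) * P := by
    rw [map_sum, Finset.mul_sum, Finset.sum_mul]
    exact Finset.sum_congr rfl fun j _ => by ring
  have part2 : ∑ j, ∑ t ∈ s, φ (a j) * (φ (c j t) * Q t)
      = ∑ t ∈ s, φ (∑ j, a j * c j t) * Q t := by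
    rw [Finset.sum_comm]
    refine Finset.sum_congr rfl fun t _ => ?_
    rw [map_sum, Finset.sum_mul]
    refine Finset.sum_congr rfl fun j _ => ?_
    rw [_root_.map_mul]
    ring
  calc ∑ j, φ (a j) * (T * P - ∑ t ∈ s, φ (c j t) * Q t)
      = (∑ j, φ (a j) * (T * P)) - ∑ j, ∑ t ∈ s, φ (a j) * (φ (c j t) * Q t) := by
        rw [← Finset.sum_sub_distrib]
        refine Finset.sum_congr rfl fun j _ => ?_
        rw [mul_sub, Finset.mul_sum]
    _ = T * φ (∑ j, a j) * P - ∑ t ∈ s, φ (∑ j, a j * c j t) * Q t := by rw [part1, part2]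
    _ = (∑ t ∈ s, φ (-∑ j, a j * c j t) * Q t) + T * φ (∑ j, a j) * P := by
        rw [sub_eq_add_neg, add_comm]
        congr 1
        rw [← Finset.sum_neg_distrib]
        exact Finset.sum_congr rfl fun t _ => by rw [map_neg, neg_mul]

open Matrix Finset

theorem bhat_formula {n : ℕ} (C : Matrix (Fin n) (Fin n) ℤ) (hC : IsFiniteCartan C)
    (J : Finset (Fin n)) (i s : Fin n) (hiJ : i ∈ J) (hsJ : s ∉ J) :
    bHatEntry C (insert s J) s i s =
      -∑ j : {x // x ∈ J},
        (((C.map (Int.cast : ℤ → ℚ)).submatrix (Subtype.val : {x // x ∈ J} → Fin n)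
          Subtype.val)⁻¹) ⟨i, hiJ⟩ j * ((C j.1 s : ℤ) : ℚ) := by
  classical
  set Aq := ((C.map (Int.cast : ℤ → ℚ)).submatrix (Subtype.val : {x // x ∈ J} → Fin n)
      Subtype.val) with hAq
  have hA : IsUnit Aq.det := cartan_sub_det_isUnit C hC J
  have hsK : s ∈ insert s J := Finset.mem_insert_self s J
  have hiK : i ∈ insert s J := Finset.mem_insert_of_mem hiJ
  have his : i ≠ s := fun h => hsJ (h ▸ hiJ)
  have hmem : ∀ k : Fin n, k ∈ insert s J → k ≠ s → k ∈ J := by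
    intro k hk hks
    rcases Finset.mem_insert.mp hk with h | h
    · exact absurd h hks
    · exact h
  set K := insert s J with hKdef
  set CK := ((C.map (Int.cast : ℤ → ℚ)).submatrix (Subtype.val : {x // x ∈ K} → Fin n)
      Subtype.val) with hCK
  set B : Matrix {x // x ∈ K} {x // x ∈ K} ℚ := 1 - (1/2 : ℚ) • CK with hB
  set Bh := Matrix.updateRow B ⟨s, hsK⟩ 0 with hBh
  set M := (1 : Matrix {x // x ∈ K} {x // x ∈ K} ℚ) - Bh with hMdef
  -- entries of M
  have hBh_s : ∀ b, Bh ⟨s, hsK⟩ b = 0 := fun b => by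
    rw [hBh, Matrix.updateRow_self]; rfl
  have hBh_ne : ∀ (a : {x // x ∈ K}), a.1 ≠ s → ∀ b, Bh a b = B a b := by
    intro a ha b
    rw [hBh, Matrix.updateRow_ne (fun h => ha (congrArg Subtype.val h))]
  have hM_s : ∀ b, M ⟨s, hsK⟩ b = (1 : Matrix {x // x ∈ K} {x // x ∈ K} ℚ) ⟨s, hsK⟩ b := by
    intro b
    rw [hMdef, Matrix.sub_apply, hBh_s, sub_zero]
  have hM_ne : ∀ (a : {x // x ∈ K}), a.1 ≠ s → ∀ b,
      M a b = (1/2 : ℚ) * ((C a.1 b.1 : ℤ) : ℚ) := by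
    intro a ha b
    rw [hMdef, Matrix.sub_apply, hBh_ne a ha b, hB]
    simp only [Matrix.sub_apply, Matrix.smul_apply, hCK, Matrix.submatrix_apply,
      Matrix.map_apply, smul_eq_mul]
    ring
  -- the solution vector
  set β : {x // x ∈ J} → ℚ := fun j => -(1/2 : ℚ) * ((C j.1 s : ℤ) : ℚ) with hβ
  set z := Aq⁻¹ *ᵥ β with hz
  have hAz : Aq *ᵥ z = β := by
    rw [hz, Matrix.mulVec_mulVec, Matrix.mul_nonsing_inv _ hA, Matrix.one_mulVec]
  set Y : Fin n → ℚ := fun k => if h : k ∈ J then 2 * z ⟨k, h⟩ else 1 with hY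
  have hYs : Y s = 1 := by rw [hY]; exact dif_neg hsJ
  have hYJ : ∀ b : {x // x ∈ J}, Y b.1 = 2 * z b := by
    intro b; rw [hY]; simp only [b.2, dif_pos]
  -- sum splitting
  have hsplit : ∀ f : Fin n → ℚ,
      ∑ b : {x // x ∈ K}, f b.1 = f s + ∑ b : {x // x ∈ J}, f b.1 := by
    intro f
    rw [Finset.univ_eq_attach, Finset.sum_attach K f, Finset.univ_eq_attach,
      Finset.sum_attach J f, hKdef, Finset.sum_insert hsJ]
  -- M *ᵥ Y∘val = e_s
  have hMy : M *ᵥ (fun b : {x // x ∈ K} => Y b.1) = Pi.single ⟨s, hsK⟩ 1 := by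
    funext a
    by_cases ha : a.1 = s
    · have ha' : a = ⟨s, hsK⟩ := Subtype.ext ha
      subst ha'
      rw [Matrix.mulVec, dotProduct]
      rw [Finset.sum_congr rfl (fun b _ => by rw [hM_s b])]
      simp only [Matrix.one_apply, ite_mul, one_mul, zero_mul]
      rw [Finset.sum_ite_eq Finset.univ (⟨s, hsK⟩ : {x // x ∈ K}) (fun b => Y b.1)]
      simp [hYs]
    · have haJ : a.1 ∈ J := hmem a.1 a.2 ha
      have key : ∑ b : {x // x ∈ K}, M a b * Y b.1
          = ∑ b : {x // x ∈ K}, (1/2 : ℚ) * ((C a.1 b.1 : ℤ) : ℚ) * Y b.1 :=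
        Finset.sum_congr rfl fun b _ => by rw [hM_ne a ha b]
      rw [Matrix.mulVec, dotProduct, key,
        hsplit (fun t => (1/2 : ℚ) * ((C a.1 t : ℤ) : ℚ) * Y t), hYs]
      have h2 : ∑ b : {x // x ∈ J}, (1/2 : ℚ) * ((C a.1 b.1 : ℤ) : ℚ) * Y b.1
          = (Aq *ᵥ z) ⟨a.1, haJ⟩ := by
        rw [Matrix.mulVec, dotProduct]
        refine Finset.sum_congr rfl fun b _ => ?_
        rw [hYJ b, hAq]
        simp only [Matrix.submatrix_apply, Matrix.map_apply]
        ring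
      rw [h2, hAz, hβ]
      rw [Pi.single_apply, if_neg (fun h => ha (congrArg Subtype.val h))]
      ring
  -- M is invertible
  have hdetM : M.det ≠ 0 := by
    intro h
    rw [← Matrix.exists_mulVec_eq_zero_iff] at h
    obtain ⟨w, hw0, hw⟩ := h
    set W : Fin n → ℚ := fun k => if h : k ∈ K then w ⟨k, h⟩ else 0 with hW
    have hwW : ∀ b : {x // x ∈ K}, w b = W b.1 := by
      intro b; rw [hW]; simp only [b.2, dif_pos]
    have hWs : W s = 0 := by
      have h1 := congrFun hw ⟨s, hsK⟩
      rw [Matrix.mulVec, dotProduct,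
        Finset.sum_congr rfl (fun b _ => by rw [hM_s b])] at h1
      simp only [Matrix.one_apply, ite_mul, one_mul, zero_mul] at h1
      rw [Finset.sum_ite_eq Finset.univ (⟨s, hsK⟩ : {x // x ∈ K}) w] at h1
      simp only [Finset.mem_univ, if_true, Pi.zero_apply] at h1
      rw [hW]
      simp only [hsK, dif_pos]
      exact h1
    set w' : {x // x ∈ J} → ℚ := fun j => W j.1 with hw'
    have hAw' : Aq *ᵥ w' = 0 := by
      funext a
      have h1 := congrFun hw ⟨a.1, Finset.mem_insert_of_mem a.2⟩
      have ha : (a.1 : Fin n) ≠ s := fun h => hsJ (h ▸ a.2)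
      rw [Matrix.mulVec, dotProduct,
        Finset.sum_congr rfl (fun b _ => by rw [hM_ne ⟨a.1, Finset.mem_insert_of_mem a.2⟩ ha b, hwW b]),
        hsplit (fun t => (1/2 : ℚ) * ((C a.1 t : ℤ) : ℚ) * W t), hWs] at h1
      simp only [mul_zero, zero_add, Pi.zero_apply] at h1
      rw [Matrix.mulVec, dotProduct, Pi.zero_apply]
      have h2 : ∑ b : {x // x ∈ J}, Aq a b * w' b
          = 2 * ∑ b : {x // x ∈ J}, (1/2 : ℚ) * ((C a.1 b.1 : ℤ) : ℚ) * W b.1 := by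
        rw [Finset.mul_sum]
        refine Finset.sum_congr rfl fun b _ => ?_
        rw [hAq, hw']
        simp only [Matrix.submatrix_apply, Matrix.map_apply]
        ring
      rw [h2, h1, mul_zero]
    have hw'0 : w' = 0 := by
      by_contra h'
      exact (isUnit_iff_ne_zero.mp hA) (Matrix.exists_mulVec_eq_zero_iff.mp ⟨w', h', hAw'⟩)
    apply hw0
    funext b
    rw [hwW b, Pi.zero_apply]
    by_cases hb : b.1 = s
    · rw [hb]; exact hWs
    · simpa using congrFun hw'0 ⟨b.1, hmem b.1 b.2 hb⟩
  -- the inverse column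
  have hMinv : ∀ k, M⁻¹ k ⟨s, hsK⟩ = Y k.1 := by
    have h1 : M⁻¹ *ᵥ (M *ᵥ (fun b : {x // x ∈ K} => Y b.1)) = fun b => Y b.1 := by
      rw [Matrix.mulVec_mulVec, Matrix.nonsing_inv_mul M (isUnit_iff_ne_zero.mpr hdetM),
        Matrix.one_mulVec]
    rw [hMy] at h1
    intro k
    have h2 := congrFun h1 k
    rw [← h2, Matrix.mulVec, dotProduct]
    rw [Finset.sum_congr rfl (fun b _ => by rw [Pi.single_apply])]
    simp only [mul_ite, mul_one, mul_zero]
    rw [Finset.sum_ite_eq' Finset.univ (⟨s, hsK⟩ : {x // x ∈ K}) (fun b => M⁻¹ k b)]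
    simp only [Finset.mem_univ, if_true]
  -- final computation
  have hmain : (Bh * (1 - Bh)⁻¹) ⟨i, hiK⟩ ⟨s, hsK⟩ = 2 * z ⟨i, hiJ⟩ := by
    rw [show (1 - Bh)⁻¹ = M⁻¹ from rfl, Matrix.mul_apply]
    rw [Finset.sum_congr rfl (fun k _ => by rw [hMinv k, hBh_ne ⟨i, hiK⟩ his k])]
    have hBval : ∀ k : {x // x ∈ K}, B ⟨i, hiK⟩ k * Y k.1 =
        ((if i = k.1 then (1:ℚ) else 0) - (1/2 : ℚ) * ((C i k.1 : ℤ) : ℚ)) * Y k.1 := by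
      intro k
      have h1 : B ⟨i, hiK⟩ k
          = (if i = k.1 then (1:ℚ) else 0) - (1/2 : ℚ) * ((C i k.1 : ℤ) : ℚ) := by
        rw [hB, Matrix.sub_apply, Matrix.smul_apply, hCK, Matrix.submatrix_apply,
          Matrix.map_apply, smul_eq_mul, Matrix.one_apply]
        by_cases h : i = k.1
        · rw [if_pos (Subtype.ext h), if_pos h]
        · rw [if_neg (fun hh => h (congrArg Subtype.val hh)), if_neg h]
      rw [h1]
    rw [Finset.sum_congr rfl (fun k _ => hBval k),
      hsplit (fun t => ((if i = t then (1:ℚ) else 0) - (1/2 : ℚ) * ((C i t : ℤ) : ℚ)) * Y t),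
      hYs, if_neg his]
    have h3 : ∑ b : {x // x ∈ J},
        ((if i = b.1 then (1:ℚ) else 0) - (1/2 : ℚ) * ((C i b.1 : ℤ) : ℚ)) * Y b.1
        = 2 * z ⟨i, hiJ⟩ - (Aq *ᵥ z) ⟨i, hiJ⟩ := by
      rw [Finset.sum_congr rfl (fun b _ => by rw [hYJ b, sub_mul])]
      rw [Finset.sum_sub_distrib]
      congr 1
      · rw [Finset.sum_congr rfl (fun b _ => by
          rw [show (if i = b.1 then (1:ℚ) else 0) = if b = ⟨i, hiJ⟩ then (1:ℚ) else 0 from by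
            simp [Subtype.ext_iff, eq_comm]])]
        simp only [ite_mul, one_mul, zero_mul]
        rw [Finset.sum_ite_eq' Finset.univ (⟨i, hiJ⟩ : {x // x ∈ J}) (fun b => 2 * z b)]
        simp
      · rw [Matrix.mulVec, dotProduct]
        refine Finset.sum_congr rfl fun b _ => ?_
        rw [hAq]
        simp only [Matrix.submatrix_apply, Matrix.map_apply]
        ring
    rw [h3, hAz, hβ]
    ring
  have hgoal : bHatEntry C K s i s = (Bh * (1 - Bh)⁻¹) ⟨i, hiK⟩ ⟨s, hsK⟩ := by
    rw [bHatEntry, dif_pos hiK, dif_pos hsK, dif_pos hsK]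
  rw [hgoal, hmain, hz, Matrix.mulVec, dotProduct, Finset.mul_sum, ← Finset.sum_neg_distrib]
  refine Finset.sum_congr rfl fun b _ => ?_
  rw [hβ]
  ring

open Finset

/-- in the ring `A_C`, for every index `i` and every subset `J` with `i ∈ J`,
one has `ϖ_i · ϖ_J = ∑_{s ∉ J} b^{K_s,ŝ}_{i,s} · ϖ_{J ∪ {s}} + (2t·∑_{j∈J}[C_J⁻¹]_{i,j}) · ϖ_J`,
where `K_s := J ∪ {s}`. -/
theorem peterson_monk_rule_repeated_index {n : ℕ}
    (C : Matrix (Fin n) (Fin n) ℤ) (hC : IsFiniteCartan C)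
    (i : Fin n) (J : Finset (Fin n)) (hiJ : i ∈ J) :
    petClass C {i} * petClass C J =
      (∑ s ∈ Jᶜ,
        Ideal.Quotient.mk (petIdeal C)
            (MvPolynomial.C (Polynomial.C (bHatEntry C (insert s J) s i s))) *
          petClass C (insert s J)) +
      Ideal.Quotient.mk (petIdeal C)
          (MvPolynomial.C (2 * Polynomial.X * Polynomial.C (∑ j ∈ J, cartanSubInv C J i j))) *
        petClass C J := by
  classical
  set R := MvPolynomial (Fin n) (Polynomial ℚ) ⧸ petIdeal C with hR
  set mk : MvPolynomial (Fin n) (Polynomial ℚ) →+* R := Ideal.Quotient.mk (petIdeal C) with hmk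
  set φ : ℚ →+* R := mk.comp ((MvPolynomial.C : Polynomial ℚ →+* MvPolynomial (Fin n) (Polynomial ℚ)).comp (Polynomial.C : ℚ →+* Polynomial ℚ)) with hφdef
  have hφ : ∀ q : ℚ, mk (MvPolynomial.C (Polynomial.C q)) = φ q := fun q => rfl
  set T : R := mk (MvPolynomial.C (2 * Polynomial.X)) with hT
  set Pcl : Fin n → R := fun k => mk (MvPolynomial.X k * ∏ l ∈ J, MvPolynomial.X l) with hPcl
  set Aq := ((C.map (Int.cast : ℤ → ℚ)).submatrix (Subtype.val : {x // x ∈ J} → Fin n)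
      Subtype.val) with hAq
  have hA : IsUnit Aq.det := cartan_sub_det_isUnit C hC J
  -- the defining relations
  have rel : ∀ j ∈ J, ∑ k : Fin n, φ ((C j k : ℤ) : ℚ) * Pcl k = T * petClass C J := by
    intro j hj
    have hg : ((∑ k : Fin n, MvPolynomial.C ((C j k : Polynomial ℚ)) * MvPolynomial.X j *
          MvPolynomial.X k) - MvPolynomial.C (2 * Polynomial.X) * MvPolynomial.X j)
        ∈ petIdeal C := by
      rw [petIdeal]
      exact Ideal.subset_span ⟨j, rfl⟩
    have hg2 := Ideal.mul_mem_right (∏ l ∈ J.erase j, MvPolynomial.X l) _ hg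
    have h0 : mk (((∑ k : Fin n, MvPolynomial.C ((C j k : Polynomial ℚ)) * MvPolynomial.X j *
          MvPolynomial.X k) - MvPolynomial.C (2 * Polynomial.X) * MvPolynomial.X j) *
          ∏ l ∈ J.erase j, MvPolynomial.X l) = 0 :=
      Ideal.Quotient.eq_zero_iff_mem.mpr hg2
    have hXP : MvPolynomial.X j * ∏ l ∈ J.erase j, MvPolynomial.X l
        = ∏ l ∈ J, (MvPolynomial.X l : MvPolynomial (Fin n) (Polynomial ℚ)) :=
      Finset.mul_prod_erase J _ hj
    have hpoly : ((∑ k : Fin n, MvPolynomial.C ((C j k : Polynomial ℚ)) * MvPolynomial.X j *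
          MvPolynomial.X k) - MvPolynomial.C (2 * Polynomial.X) * MvPolynomial.X j) *
          ∏ l ∈ J.erase j, MvPolynomial.X l
        = (∑ k : Fin n, MvPolynomial.C ((C j k : Polynomial ℚ)) *
            (MvPolynomial.X k * ∏ l ∈ J, MvPolynomial.X l)) -
          MvPolynomial.C (2 * Polynomial.X) * ∏ l ∈ J, MvPolynomial.X l := by
      rw [sub_mul, Finset.sum_mul]
      refine congrArg₂ (· - ·) ?_ ?_
      · refine Finset.sum_congr rfl fun k _ => ?_
        rw [← hXP]; ring
      · rw [← hXP]; ring
    rw [hpoly, map_sub, sub_eq_zero, map_sum] at h0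
    have hcast : ∀ k, mk (MvPolynomial.C ((C j k : Polynomial ℚ)) *
        (MvPolynomial.X k * ∏ l ∈ J, MvPolynomial.X l)) = φ ((C j k : ℤ) : ℚ) * Pcl k := by
      intro k
      rw [_root_.map_mul, ← hφ ((C j k : ℤ) : ℚ), map_intCast (Polynomial.C : ℚ →+* Polynomial ℚ)]
    rw [Finset.sum_congr rfl (fun k _ => hcast k)] at h0
    rw [h0, _root_.map_mul]
    rfl
  -- the linear system over the subtype
  set v : {x // x ∈ J} → R := fun k => Pcl k.1 with hv
  set u : {x // x ∈ J} → R := fun j => T * petClass C J -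
      ∑ s ∈ Jᶜ, φ ((C j.1 s : ℤ) : ℚ) * petClass C (insert s J) with hu
  have hsys : ∀ j : {x // x ∈ J}, ∑ k : {x // x ∈ J}, φ (Aq j k) * v k = u j := by
    intro j
    have h1 := rel j.1 j.2
    rw [← Finset.sum_add_sum_compl J (fun k => φ ((C j.1 k : ℤ) : ℚ) * Pcl k)] at h1
    have h2 : ∑ k ∈ J, φ ((C j.1 k : ℤ) : ℚ) * Pcl k
        = ∑ k : {x // x ∈ J}, φ (Aq j k) * v k := by
      rw [Finset.univ_eq_attach,
        ← Finset.sum_attach J (fun k => φ ((C j.1 k : ℤ) : ℚ) * Pcl k)]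
      rfl
    have h3 : ∑ k ∈ Jᶜ, φ ((C j.1 k : ℤ) : ℚ) * Pcl k
        = ∑ k ∈ Jᶜ, φ ((C j.1 k : ℤ) : ℚ) * petClass C (insert k J) := by
      refine Finset.sum_congr rfl fun k hk => ?_
      rw [Finset.mem_compl] at hk
      congr 1
      rw [hPcl, petClass, Finset.prod_insert hk]
    rw [h2, h3] at h1
    rw [hu, ← h1]
    ring
  have hvi := linsolve φ Aq hA v u hsys ⟨i, hiJ⟩
  -- rewrite goal left-hand side
  have hlhs : petClass C {i} * petClass C J = v ⟨i, hiJ⟩ := by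
    rw [petClass, petClass, Finset.prod_singleton, ← _root_.map_mul]
  -- rewrite goal coefficients
  have hq : (∑ j ∈ J, cartanSubInv C J i j) = ∑ j : {x // x ∈ J}, Aq⁻¹ ⟨i, hiJ⟩ j := by
    rw [Finset.univ_eq_attach, ← Finset.sum_attach J (fun j => cartanSubInv C J i j)]
    refine Finset.sum_congr rfl fun j _ => ?_
    rw [cartanSubInv, dif_pos hiJ, dif_pos j.2, hAq]
  have hcoef2 : mk (MvPolynomial.C (2 * Polynomial.X *
        Polynomial.C (∑ j ∈ J, cartanSubInv C J i j)))
      = T * φ (∑ j : {x // x ∈ J}, Aq⁻¹ ⟨i, hiJ⟩ j) := by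
    rw [← hq, map_mul MvPolynomial.C, map_mul mk, hφ]
  have hcoef1 : ∀ s ∈ Jᶜ, mk (MvPolynomial.C (Polynomial.C (bHatEntry C (insert s J) s i s)))
      = φ (-∑ j : {x // x ∈ J}, Aq⁻¹ ⟨i, hiJ⟩ j * ((C j.1 s : ℤ) : ℚ)) := by
    intro s hs
    rw [hφ, bhat_formula C hC J i s hiJ (Finset.mem_compl.mp hs), hAq]
  have hsum1 : (∑ s ∈ Jᶜ, Ideal.Quotient.mk (petIdeal C)
        (MvPolynomial.C (Polynomial.C (bHatEntry C (insert s J) s i s))) *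
        petClass C (insert s J))
      = ∑ s ∈ Jᶜ, φ (-∑ j : {x // x ∈ J}, Aq⁻¹ ⟨i, hiJ⟩ j * ((C j.1 s : ℤ) : ℚ)) *
        petClass C (insert s J) :=
    Finset.sum_congr rfl fun s hs => by rw [← hmk, hcoef1 s hs]
  rw [hlhs, hvi, hsum1, hcoef2]
  simp only [hu]
  have key := monk_assemble φ Jᶜ (fun j : {x // x ∈ J} => Aq⁻¹ ⟨i, hiJ⟩ j)
    (fun j t => ((C j.1 t : ℤ) : ℚ)) T (petClass C J) (fun t => petClass C (insert t J))
  exact key
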